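/- Let (A, B) be a nonempty bounded convex proximal parallel pair in a Banach space X, with B = A + h, having the rectangle property and property UC, and let T: A ∪ B → A ∪ B be an asymptotically relatively nonexpansive map (with associated sequence {k_n}) satisfying T(A) ⊆ B and T(B) ⊆ A. For x ∈ A define r_x(b) = limsup_m ‖u_m(x) − b‖ for b ∈ B. Then for every a ∈ A and every n ∈ ℕ, r_x(u_n(a + h)) ≤ k_n · r_x(a + h). -/

import Mathlib

open Filter Topology

/-- dist(A,B) = inf { ‖a - b‖ : a ∈ A, b ∈ B }. -/
noncomputable def setDist {X : Type*} [NormedAddCommGroup X] (A B : Set X) : ℝ :=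
  sInf {d : ℝ | ∃ a ∈ A, ∃ b ∈ B, d = ‖a - b‖}

/-- (A,B) is a proximal pair. -/
def IsProximalPair {X : Type*} [NormedAddCommGroup X] (A B : Set X) : Prop :=
  ∀ x ∈ A, ∀ y ∈ B, ∃ x₁ ∈ A, ∃ y₁ ∈ B,
    ‖x - y₁‖ = setDist A B ∧ ‖y - x₁‖ = setDist A B

/-- (A,B) is a sharp proximal pair: the proximal pair (x₁,y₁) is unique. -/
def IsSharpProximalPair {X : Type*} [NormedAddCommGroup X] (A B : Set X) : Prop :=
  IsProximalPair A B ∧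
    ∀ x ∈ A, ∀ y ∈ B, ∀ x₁ ∈ A, ∀ y₁ ∈ B, ∀ x₂ ∈ A, ∀ y₂ ∈ B,
      ‖x - y₁‖ = setDist A B → ‖y - x₁‖ = setDist A B →
      ‖x - y₂‖ = setDist A B → ‖y - x₂‖ = setDist A B → x₁ = x₂ ∧ y₁ = y₂

/-- (A,B) is a proximal parallel pair: a sharp proximal pair with a unique
translation vector h such that B = A + h. -/
def IsProximalParallelPair {X : Type*} [NormedAddCommGroup X] (A B : Set X) : Prop :=
  IsSharpProximalPair A B ∧ ∃! h : X, B = (fun a => a + h) '' A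

/-- Property UC of the pair (A, B). -/
def PropertyUC {X : Type*} [NormedAddCommGroup X] (A B : Set X) : Prop :=
  ∀ x z y : ℕ → X, (∀ n, x n ∈ A) → (∀ n, z n ∈ A) → (∀ n, y n ∈ B) →
    Filter.Tendsto (fun n => ‖x n - y n‖) Filter.atTop (nhds (setDist A B)) →
    Filter.Tendsto (fun n => ‖z n - y n‖) Filter.atTop (nhds (setDist A B)) →
    Filter.Tendsto (fun n => ‖x n - z n‖) Filter.atTop (nhds 0)

/-- Rectangle property of a parallel pair (A, A + h). -/
def RectangleProperty {X : Type*} [NormedAddCommGroup X] (A : Set X) (h : X) : Prop :=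
  ∀ x ∈ A, ∀ y ∈ A, ‖x + h - y‖ = ‖y + h - x‖

/-- T is asymptotically relatively nonexpansive (with sequence k) on the pair (A,B). -/
def AsympRelNonexpansive {X : Type*} [NormedAddCommGroup X]
    (A B : Set X) (T : X → X) (k : ℕ → ℝ) : Prop :=
  (∀ n, 1 ≤ k n) ∧ Filter.Tendsto k Filter.atTop (nhds 1) ∧
    ∀ n : ℕ, ∀ x ∈ A, ∀ y ∈ B, ‖T^[n] x - T^[n] y‖ ≤ k n * ‖x - y‖

/-- u_n(x): given the proximal companion x' of x, it is Tⁿ(x') for odd n and Tⁿ(x) for even n. -/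
def uSeq {X : Type*} (T : X → X) (x x' : X) (n : ℕ) : X :=
  if Odd n then T^[n] x' else T^[n] x

/-- Weak convergence of a sequence. -/
def WeakConvSeq {X : Type*} [NormedAddCommGroup X] [NormedSpace ℝ X]
    (u : ℕ → X) (y : X) : Prop :=
  ∀ f : X →L[ℝ] ℝ, Filter.Tendsto (fun n => f (u n)) Filter.atTop (nhds (f y))

/-- ω_w(u): weak subsequential limit points of the sequence u. -/
def omegaW {X : Type*} [NormedAddCommGroup X] [NormedSpace ℝ X] (u : ℕ → X) : Set X :=
  {y | ∃ φ : ℕ → ℕ, StrictMono φ ∧ WeakConvSeq (fun i => u (φ i)) y}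

/-- ω(u): norm subsequential limit points of the sequence u. -/
def omegaS {X : Type*} [NormedAddCommGroup X] (u : ℕ → X) : Set X :=
  {y | ∃ φ : ℕ → ℕ, StrictMono φ ∧
    Filter.Tendsto (fun i => u (φ i)) Filter.atTop (nhds y)}

/-- Every subsequence of u admits a norm-convergent subsequence. -/
def NormSubseqCompact {X : Type*} [NormedAddCommGroup X] (u : ℕ → X) : Prop :=
  ∀ φ : ℕ → ℕ, StrictMono φ → ∃ ψ : ℕ → ℕ, StrictMono ψ ∧ ∃ y : X,
    Filter.Tendsto (fun i => u (φ (ψ i))) Filter.atTop (nhds y)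

/-- X has uniformly Kadec-Klee (UKK) norm. -/
def UKKNorm (X : Type*) [NormedAddCommGroup X] [NormedSpace ℝ X] : Prop :=
  ∀ ε : ℝ, 0 < ε → ∃ δ : ℝ, 0 < δ ∧ ∀ (u : ℕ → X) (y : X),
    (∀ n, ‖u n‖ ≤ 1) → WeakConvSeq u y →
    ε < sInf {d : ℝ | ∃ n m : ℕ, n ≠ m ∧ d = ‖u n - u m‖} → ‖y‖ ≤ 1 - δ

/-- X is nearly uniformly convex: reflexive (the canonical embedding into the
double dual is surjective) with UKK norm. -/
def NearlyUniformlyConvex (X : Type*) [NormedAddCommGroup X] [NormedSpace ℝ X] : Prop :=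
  Function.Surjective (NormedSpace.inclusionInDoubleDual ℝ X) ∧ UKKNorm X

/-!
Put `w_m := u_m(x + h) ∈ B`, the companion of `u_m(x) ∈ A`. For even `n`,
`u_{m+n}(x) = Tⁿ(u_m(x))` and `u_n(a + h) = Tⁿ(a + h)`, so the bound holds termwise. For odd `n`,
`u_{m+n}(x) = Tⁿ(w_m)` and `u_n(a + h) = Tⁿ a`, and the rectangle property gives
`‖Tⁿ w_m - Tⁿ a‖ ≤ kₙ ‖a - w_m‖ = kₙ ‖(a + h) - (w_m - h)‖`. Proximality and the rectangle
property force `‖h‖ = dist(A,B)`, and `‖u_m(x) - w_m‖ → dist(A,B)` because `kₘ → 1`; property UC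
then gives `u_m(x) - (w_m - h) → 0`, so `w_m - h` may be replaced by `u_m(x)` in the limsup.
-/

open Set

lemma limsup_le_mul_limsup_of_shift_le {F G E : ℕ → ℝ} {c : ℝ} (n : ℕ) (hc : 0 ≤ c)
    (hG : 0 ≤ G) (hF : 0 ≤ F) (hFbdd : IsBoundedUnder (· ≤ ·) atTop F)
    (hE : Tendsto E atTop (𝓝 0)) (hle : ∀ m, G (m + n) ≤ c * F m + E m) :
    limsup G atTop ≤ c * limsup F atTop := by
  have hcF : IsBoundedUnder (· ≤ ·) atTop (c * F ·) :=
    (hFbdd.isBoundedUnder (monotone_mul_left_of_nonneg hc) :)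
  have hcF' : IsBoundedUnder (· ≥ ·) atTop (c * F ·) :=
    isBoundedUnder_of_eventually_ge (a := 0) (.of_forall fun m => mul_nonneg hc (hF m))
  have hGcob : IsCoboundedUnder (· ≤ ·) atTop (fun m => G (m + n)) :=
    (isBoundedUnder_of_eventually_ge (a := 0) (.of_forall fun m => hG (m + n))).isCoboundedUnder_le
  calc limsup G atTop = limsup (fun m => G (m + n)) atTop := (limsup_nat_add G n).symm
    _ ≤ limsup (fun m => c * F m + E m) atTop :=
        limsup_le_limsup (.of_forall hle) hGcob (isBoundedUnder_le_add hcF hE.isBoundedUnder_le)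
    _ ≤ limsup (c * F ·) atTop + limsup E atTop :=
        limsup_add_le hcF' hcF hE.isBoundedUnder_ge.isCoboundedUnder_le hE.isBoundedUnder_le
    _ = c * limsup F atTop := by
        rw [hE.limsup_eq, add_zero]
        exact ((monotone_mul_left_of_nonneg hc).map_limsup_of_continuousAt F
          (continuous_const_mul c).continuousAt hFbdd
          (isBoundedUnder_of_eventually_ge (a := 0) (.of_forall hF)).isCoboundedUnder_le).symm

section ParallelPair

variable {X : Type*} [NormedAddCommGroup X] {A B : Set X} {h a b : X}

lemma setDist_le_norm_sub (ha : a ∈ A) (hb : b ∈ B) : setDist A B ≤ ‖a - b‖ :=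
  csInf_le ⟨0, by rintro _ ⟨_, -, _, -, rfl⟩; exact norm_nonneg _⟩ ⟨a, ha, b, hb, rfl⟩

lemma add_mem_of_eq_image_add (hBh : B = (· + h) '' A) (ha : a ∈ A) : a + h ∈ B :=
  hBh ▸ mem_image_of_mem _ ha

lemma sub_mem_of_eq_image_add (hBh : B = (· + h) '' A) (hb : b ∈ B) : b - h ∈ A := by
  obtain ⟨c, hc, rfl⟩ := hBh ▸ hb
  simpa using hc

lemma norm_eq_setDist_of_rectangleProperty [NormedSpace ℝ X] (hprox : IsProximalPair A B)
    (hBh : B = (· + h) '' A) (hrect : RectangleProperty A h) (ha : a ∈ A) :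
    ‖h‖ = setDist A B := by
  have hah := add_mem_of_eq_image_add hBh ha
  obtain ⟨-, -, y, hy, hay, -⟩ := hprox a ha (a + h) hah
  obtain ⟨c, hc, rfl⟩ := hBh ▸ hy
  have hac : ‖a + h - c‖ = setDist A B := by
    rw [← hrect c hc a ha, ← hay, norm_sub_rev]
  refine le_antisymm ?_ (by simpa using setDist_le_norm_sub ha hah)
  -- `a - (c + h)` and `a + h - c` both have norm `dist(A,B)` and differ by `2 • h`
  have := norm_sub_le (a + h - c) (a - (c + h))
  rw [hac, hay, show a + h - c - (a - (c + h)) = (2 : ℝ) • h by module, norm_smul] at this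
  norm_num at this
  linarith

end ParallelPair

section Iterate

variable {α : Type*} {T : α → α} {s t : Set α} {x x' : α} {m n : ℕ}

lemma mapsTo_iterate_of_even (hst : MapsTo T s t) (hts : MapsTo T t s) (hn : Even n) :
    MapsTo T^[n] s s := by
  obtain ⟨j, rfl⟩ := hn
  rw [← two_mul, Function.iterate_mul]
  exact (hts.comp hst).iterate j

lemma mapsTo_iterate_of_odd (hst : MapsTo T s t) (hts : MapsTo T t s) (hn : Odd n) :
    MapsTo T^[n] s t := by
  obtain ⟨j, rfl⟩ := hn
  exact (mapsTo_iterate_of_even hts hst (even_two_mul j)).comp hst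

lemma uSeq_of_even (hn : Even n) : uSeq T x x' n = T^[n] x :=
  if_neg (Nat.not_odd_iff_even.mpr hn)

lemma uSeq_of_odd (hn : Odd n) : uSeq T x x' n = T^[n] x' :=
  if_pos hn

lemma uSeq_mem (hst : MapsTo T s t) (hts : MapsTo T t s) (hx : x ∈ s) (hx' : x' ∈ t) (n : ℕ) :
    uSeq T x x' n ∈ s := by
  rcases n.even_or_odd with hn | hn
  · rw [uSeq_of_even hn]; exact mapsTo_iterate_of_even hst hts hn hx
  · rw [uSeq_of_odd hn]; exact mapsTo_iterate_of_odd hts hst hn hx'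

lemma uSeq_add_of_even (hn : Even n) : uSeq T x x' (m + n) = T^[n] (uSeq T x x' m) := by
  rcases m.even_or_odd with hm | hm
  · rw [uSeq_of_even (hm.add hn), uSeq_of_even hm, add_comm, Function.iterate_add_apply]
  · rw [uSeq_of_odd (hm.add_even hn), uSeq_of_odd hm, add_comm, Function.iterate_add_apply]

lemma uSeq_add_of_odd (hn : Odd n) : uSeq T x x' (m + n) = T^[n] (uSeq T x' x m) := by
  rcases m.even_or_odd with hm | hm
  · rw [uSeq_of_odd (hm.add_odd hn), uSeq_of_even hm, add_comm, Function.iterate_add_apply]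
  · rw [uSeq_of_even (hm.add_odd hn), uSeq_of_odd hm, add_comm, Function.iterate_add_apply]

end Iterate

section Asymptotic

variable {X : Type*} [NormedAddCommGroup X] {A B : Set X} {h a x x' z : X} {T : X → X}
  {k : ℕ → ℝ}

lemma norm_uSeq_sub_uSeq_swap (m : ℕ) :
    ‖uSeq T x x' m - uSeq T x' x m‖ = ‖T^[m] x - T^[m] x'‖ := by
  rcases m.even_or_odd with hm | hm
  · rw [uSeq_of_even hm, uSeq_of_even hm]
  · rw [uSeq_of_odd hm, uSeq_of_odd hm, norm_sub_rev]

lemma tendsto_norm_uSeq_sub_uSeq_swap (hT : AsympRelNonexpansive A B T k)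
    (hAB : MapsTo T A B) (hBA : MapsTo T B A) (hx : x ∈ A) (hx' : x' ∈ B)
    (hxx' : ‖x - x'‖ = setDist A B) :
    Tendsto (fun m => ‖uSeq T x x' m - uSeq T x' x m‖) atTop (𝓝 (setDist A B)) := by
  refine tendsto_of_tendsto_of_tendsto_of_le_of_le tendsto_const_nhds
    (by simpa using hT.2.1.mul_const (setDist A B))
    (fun m => setDist_le_norm_sub (uSeq_mem hAB hBA hx hx' m) (uSeq_mem hBA hAB hx' hx m))
    (fun m => ?_)
  rw [norm_uSeq_sub_uSeq_swap, ← hxx']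
  exact hT.2.2 m x hx x' hx'

lemma PropertyUC.tendsto_norm_sub_sub_translate (hUC : PropertyUC A B)
    (hBh : B = (· + h) '' A) (hh : ‖h‖ = setDist A B) {u w : ℕ → X} (hu : ∀ m, u m ∈ A)
    (hw : ∀ m, w m ∈ B) (huw : Tendsto (fun m => ‖u m - w m‖) atTop (𝓝 (setDist A B))) :
    Tendsto (fun m => ‖u m - (w m - h)‖) atTop (𝓝 0) :=
  hUC u (w · - h) w hu (fun m => sub_mem_of_eq_image_add hBh (hw m)) hw huw
    (by simp [hh])

lemma AsympRelNonexpansive.coeff_nonneg (hT : AsympRelNonexpansive A B T k) (n : ℕ) :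
    0 ≤ k n :=
  zero_le_one.trans (hT.1 n)

lemma norm_iterate_sub_le_of_rectangleProperty (hT : AsympRelNonexpansive A B T k)
    (hBh : B = (· + h) '' A) (hrect : RectangleProperty A h) (ha : a ∈ A) (hz : z ∈ B)
    (y : X) (n : ℕ) :
    ‖T^[n] z - T^[n] a‖ ≤ k n * ‖y - (a + h)‖ + k n * ‖y - (z - h)‖ := by
  have hk := hT.coeff_nonneg n
  calc ‖T^[n] z - T^[n] a‖ = ‖T^[n] a - T^[n] z‖ := norm_sub_rev _ _
    _ ≤ k n * ‖a - z‖ := hT.2.2 n a ha z hz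
    _ = k n * ‖a + h - (z - h)‖ := by
        rw [← hrect _ (sub_mem_of_eq_image_add hBh hz) a ha, sub_add_cancel, norm_sub_rev]
    _ ≤ k n * (‖y - (a + h)‖ + ‖y - (z - h)‖) := by
        gcongr
        rw [norm_sub_rev y]
        exact norm_sub_le_norm_sub_add_norm_sub _ _ _
    _ = _ := mul_add _ _ _

end Asymptotic

theorem asymptotic_radius_uSeq_bound_general
    {X : Type*} [NormedAddCommGroup X] [NormedSpace ℝ X]
    (A B : Set X) (h : X)
    (hAbd : Bornology.IsBounded A)
    (hpair : IsProximalParallelPair A B)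
    (hBh : B = (fun a => a + h) '' A)
    (hrect : RectangleProperty A h)
    (hUC : PropertyUC A B)
    (T : X → X) (hTA : Set.MapsTo T A B) (hTB : Set.MapsTo T B A)
    (k : ℕ → ℝ) (hT : AsympRelNonexpansive A B T k) :
    ∀ x ∈ A, ∀ a ∈ A, ∀ n : ℕ,
      Filter.limsup (fun m => ‖uSeq T x (x + h) m - uSeq T (a + h) a n‖) Filter.atTop ≤
        k n * Filter.limsup (fun m => ‖uSeq T x (x + h) m - (a + h)‖) Filter.atTop := by
  intro x hx a ha n
  have hxh := add_mem_of_eq_image_add hBh hx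
  have hh := norm_eq_setDist_of_rectangleProperty hpair.1.1 hBh hrect hx
  have huA := uSeq_mem hTA hTB hx hxh
  have hwB := uSeq_mem hTB hTA hxh hx
  have hclose := hUC.tendsto_norm_sub_sub_translate hBh hh huA hwB
    (tendsto_norm_uSeq_sub_uSeq_swap hT hTA hTB hx hxh (by simpa using hh))
  have hpoint : ∀ m, ‖uSeq T x (x + h) (m + n) - uSeq T (a + h) a n‖ ≤
      k n * ‖uSeq T x (x + h) m - (a + h)‖ +
        k n * ‖uSeq T x (x + h) m - (uSeq T (x + h) x m - h)‖ := by
    intro m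
    rcases n.even_or_odd with hn | hn
    · rw [uSeq_add_of_even hn, uSeq_of_even hn]
      exact (hT.2.2 n _ (huA m) _ (add_mem_of_eq_image_add hBh ha)).trans
        (le_add_of_nonneg_right (mul_nonneg (hT.coeff_nonneg n) (norm_nonneg _)))
    · rw [uSeq_add_of_odd hn, uSeq_of_odd hn]
      exact norm_iterate_sub_le_of_rectangleProperty hT hBh hrect ha (hwB m) _ n
  obtain ⟨C, hC⟩ := isBounded_iff_forall_norm_le.mp hAbd
  refine limsup_le_mul_limsup_of_shift_le n (hT.coeff_nonneg n) (fun _ => norm_nonneg _)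
    (fun _ => norm_nonneg _) ?_ (by simpa using hclose.const_mul (k n)) hpoint
  exact isBoundedUnder_of_eventually_le (a := C + ‖a + h‖) <| .of_forall fun m =>
    (norm_sub_le _ _).trans (by gcongr; exact hC _ (huA m))

/-- Proposition 3.2(3): r_x(u_n(a+h)) ≤ k_n · r_x(a+h) for every n and a ∈ A. -/
theorem asymptotic_radius_uSeq_bound
    {X : Type*} [NormedAddCommGroup X] [NormedSpace ℝ X] [CompleteSpace X]
    (A B : Set X) (h : X) (hAne : A.Nonempty) (hBne : B.Nonempty)
    (hAbd : Bornology.IsBounded A) (hBbd : Bornology.IsBounded B)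
    (hAcv : Convex ℝ A) (hBcv : Convex ℝ B)
    (hpair : IsProximalParallelPair A B)
    (hBh : B = (fun a => a + h) '' A)
    (hrect : RectangleProperty A h)
    (hUC : PropertyUC A B)
    (T : X → X) (hTA : Set.MapsTo T A B) (hTB : Set.MapsTo T B A)
    (k : ℕ → ℝ) (hT : AsympRelNonexpansive A B T k) :
    ∀ x ∈ A, ∀ a ∈ A, ∀ n : ℕ,
      Filter.limsup (fun m => ‖uSeq T x (x + h) m - uSeq T (a + h) a n‖) Filter.atTop ≤
        k n * Filter.limsup (fun m => ‖uSeq T x (x + h) m - (a + h)‖) Filter.atTop :=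
  asymptotic_radius_uSeq_bound_general A B h hAbd hpair hBh hrect hUC T hTA hTB k hT
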